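/- Let q > 0, L₀ > 0, Tₘ₀ > 0 with L₀ > Tₘ₀, let γ > 0 satisfy q − L₀·γ = √π·(Tₘ₀/2 + L₀·γ²)·e^{γ²}·erf(γ), set A = (q − L₀γ)/(√π·erf γ), T(y,t) = A·(2√t·e^{−y²/(4t)} + √π·y·erf(y/(2√t))) − q·y, S(t) = 2γ√t, C(t) = γ(L₀ − Tₘ₀)t, and Θ(y,t) = C(t) − ∫_{S(t)}^{y} T(u,t) du. Assume D₀ := γ(L₀ − Tₘ₀) − 2qγ² + 2A·( (√π/2)·erf γ + √π·γ²·erf γ + γ·e^{−γ²} ) ≠ 0. Then for every δ > 0 and every t > 0, the free boundary X₀*(t) := T(0,t)/(δ·Θ(0,t)) equals C₀/(δ√t), where C₀ = 2A/D₀. -/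

import Mathlib

/-!
`T(y,t) = A·F(y,t) − q·y`, where `F(u,t) = 2√t e^{−u²/(4t)} + √π u erf(u/(2√t))` has the explicit
primitive `G(u,t) = √π (u²/2 + t) erf(u/(2√t)) + √t u e^{−u²/(4t)}`. Since `G(0,t) = 0` and
`G(2γ√t,t) = t (√π (1 + 2γ²) erf γ + 2γ e^{−γ²})`, one finds `Θ(0,t) = t D₀`, while `T(0,t) = 2A√t`.
-/

/-- The Gauss error function `erf x = (2/√π) ∫₀ˣ e^{-s²} ds`. -/
noncomputable def erf (x : ℝ) : ℝ :=
  (2 / Real.sqrt Real.pi) * ∫ s in (0:ℝ)..x, Real.exp (-s ^ 2)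

open Real

theorem hasDerivAt_erf (x : ℝ) : HasDerivAt erf (2 / √π * exp (-x ^ 2)) x :=
  ((by fun_prop : Continuous fun s : ℝ => exp (-s ^ 2)).integral_hasStrictDerivAt 0 x)
    |>.hasDerivAt.const_mul _

theorem continuous_erf : Continuous erf :=
  continuous_iff_continuousAt.2 fun x => (hasDerivAt_erf x).continuousAt

@[simp]
theorem erf_zero : erf 0 = 0 := by simp [erf]

noncomputable def erfProfile (t u : ℝ) : ℝ :=
  2 * √t * exp (-u ^ 2 / (4 * t)) + √π * u * erf (u / (2 * √t))

noncomputable def erfProfilePrimitive (t u : ℝ) : ℝ :=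
  √π * (u ^ 2 / 2 + t) * erf (u / (2 * √t)) + √t * u * exp (-u ^ 2 / (4 * t))

theorem continuous_erfProfile (t : ℝ) : Continuous (erfProfile t) := by
  unfold erfProfile
  have := continuous_erf
  fun_prop

theorem erfProfile_zero (t : ℝ) : erfProfile t 0 = 2 * √t := by
  simp [erfProfile]

theorem hasDerivAt_erfProfilePrimitive {t : ℝ} (ht : 0 < t) (u : ℝ) :
    HasDerivAt (erfProfilePrimitive t) (erfProfile t u) u := by
  have hr : √t ≠ 0 := (sqrt_pos.2 ht).ne'
  have hrt : √t ^ 2 = t := sq_sqrt ht.le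
  have hgauss : exp (-(u / (2 * √t)) ^ 2) = exp (-u ^ 2 / (4 * t)) := by
    congr 1; rw [div_pow, mul_pow, hrt]; ring
  have herf : HasDerivAt (fun u => erf (u / (2 * √t)))
      (2 / √π * exp (-u ^ 2 / (4 * t)) * (1 / (2 * √t))) u := by
    have := (hasDerivAt_erf (u / (2 * √t))).comp u ((hasDerivAt_id' u).div_const (2 * √t))
    rwa [hgauss] at this
  have hexp : HasDerivAt (fun u => exp (-u ^ 2 / (4 * t)))
      (exp (-u ^ 2 / (4 * t)) * (-(2 * u) / (4 * t))) u := by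
    have := ((hasDerivAt_pow 2 u).neg.div_const (4 * t)).exp
    simpa using this
  have hpoly : HasDerivAt (fun u : ℝ => √π * (u ^ 2 / 2 + t)) (√π * u) u := by
    simpa using (((hasDerivAt_pow 2 u).div_const 2).add_const t).const_mul √π
  refine ((hpoly.mul herf).add (((hasDerivAt_id u).const_mul √t).mul hexp)).congr_deriv ?_
  simp only [erfProfile, id]
  field_simp
  linear_combination (-(8 * t + 4 * u ^ 2) * exp (-(u ^ 2 / (t * 4)))) * hrt

theorem integral_erfProfile {t : ℝ} (ht : 0 < t) (a b : ℝ) :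
    ∫ u in a..b, erfProfile t u = erfProfilePrimitive t b - erfProfilePrimitive t a :=
  intervalIntegral.integral_eq_sub_of_hasDerivAt (fun u _ => hasDerivAt_erfProfilePrimitive ht u)
    ((continuous_erfProfile t).intervalIntegrable a b)

theorem erfProfilePrimitive_zero (t : ℝ) : erfProfilePrimitive t 0 = 0 := by
  simp [erfProfilePrimitive]

theorem erfProfilePrimitive_two_mul_sqrt {t : ℝ} (ht : 0 < t) (γ : ℝ) :
    erfProfilePrimitive t (2 * γ * √t) =
      t * (√π * (1 + 2 * γ ^ 2) * erf γ + 2 * γ * exp (-γ ^ 2)) := by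
  have hr : √t ≠ 0 := (sqrt_pos.2 ht).ne'
  have hrt : √t ^ 2 = t := sq_sqrt ht.le
  have harg : 2 * γ * √t / (2 * √t) = γ := by field_simp
  have hgauss : -(2 * γ * √t) ^ 2 / (4 * t) = -γ ^ 2 := by
    rw [mul_pow, hrt]; field_simp; ring
  rw [erfProfilePrimitive, harg, hgauss]
  linear_combination (2 * γ ^ 2 * √π * erf γ + 2 * γ * exp (-γ ^ 2)) * hrt

theorem integral_affine_erfProfile {t : ℝ} (ht : 0 < t) (A q γ : ℝ) :
    ∫ u in 2 * γ * √t..0, (A * erfProfile t u - q * u) =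
      t * (2 * q * γ ^ 2 - A * (√π * (1 + 2 * γ ^ 2) * erf γ + 2 * γ * exp (-γ ^ 2))) := by
  rw [intervalIntegral.integral_sub (((continuous_erfProfile t).intervalIntegrable _ _).const_mul A)
    (intervalIntegral.intervalIntegrable_id.const_mul q), intervalIntegral.integral_const_mul,
    intervalIntegral.integral_const_mul, integral_erfProfile ht, erfProfilePrimitive_zero,
    erfProfilePrimitive_two_mul_sqrt ht, integral_id, mul_pow, sq_sqrt ht.le]
  ring

theorem stmt17_general (q L₀ Tm₀ γ A : ℝ)
    (T : ℝ → ℝ → ℝ)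
    (hT : ∀ y t : ℝ, T y t =
      A * (2 * Real.sqrt t * Real.exp (-y ^ 2 / (4 * t))
            + Real.sqrt Real.pi * y * erf (y / (2 * Real.sqrt t))) - q * y)
    (S : ℝ → ℝ) (hS : ∀ t : ℝ, S t = 2 * γ * Real.sqrt t)
    (C : ℝ → ℝ) (hC : ∀ t : ℝ, C t = γ * (L₀ - Tm₀) * t)
    (Θ : ℝ → ℝ → ℝ)
    (hΘ : ∀ y t : ℝ, Θ y t = C t - ∫ u in S t..y, T u t)
    (D₀ : ℝ)
    (hD₀ : D₀ = γ * (L₀ - Tm₀) - 2 * q * γ ^ 2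
        + 2 * A * (Real.sqrt Real.pi / 2 * erf γ
            + Real.sqrt Real.pi * γ ^ 2 * erf γ + γ * Real.exp (-γ ^ 2))) :
    ∀ δ : ℝ, 0 < δ → ∀ t : ℝ, 0 < t →
      T 0 t / (δ * Θ 0 t) = (2 * A / D₀) / (δ * Real.sqrt t) := by
  intro δ _ t ht
  have hT' : ∀ u, T u t = A * erfProfile t u - q * u := fun u => hT u t
  have hT0 : T 0 t = 2 * A * √t := by rw [hT', erfProfile_zero]; ring
  have hΘ0 : Θ 0 t = t * D₀ := by
    simp only [hΘ, hS, hT', integral_affine_erfProfile ht, hC, hD₀]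
    ring
  have hr : √t ≠ 0 := (sqrt_pos.2 ht).ne'
  rw [hT0, hΘ0, div_div, show δ * (t * D₀) = D₀ * (δ * √t) * √t by
    linear_combination (-δ * D₀) * mul_self_sqrt ht.le, mul_div_mul_right _ _ hr]

/-- With `T, S, C, Θ` as in the explicit Stefan solution and
`D₀ = γ(L₀ − Tₘ₀) − 2qγ² + 2A((√π/2) erf γ + √π γ² erf γ + γ e^{−γ²}) ≠ 0`,
for every `δ > 0` and `t > 0`, the free boundary
`X₀*(t) = T(0,t)/(δ Θ(0,t))` equals `C₀/(δ√t)` with `C₀ = 2A/D₀`. -/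
theorem stmt17 (q L₀ Tm₀ γ A : ℝ) (hq : 0 < q) (hL : 0 < L₀) (hTm : 0 < Tm₀)
    (hLTm : Tm₀ < L₀) (hγ : 0 < γ)
    (hγeq : q - L₀ * γ =
      Real.sqrt Real.pi * (Tm₀ / 2 + L₀ * γ ^ 2) * Real.exp (γ ^ 2) * erf γ)
    (hA : A = (q - L₀ * γ) / (Real.sqrt Real.pi * erf γ))
    (T : ℝ → ℝ → ℝ)
    (hT : ∀ y t : ℝ, T y t =
      A * (2 * Real.sqrt t * Real.exp (-y ^ 2 / (4 * t))
            + Real.sqrt Real.pi * y * erf (y / (2 * Real.sqrt t))) - q * y)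
    (S : ℝ → ℝ) (hS : ∀ t : ℝ, S t = 2 * γ * Real.sqrt t)
    (C : ℝ → ℝ) (hC : ∀ t : ℝ, C t = γ * (L₀ - Tm₀) * t)
    (Θ : ℝ → ℝ → ℝ)
    (hΘ : ∀ y t : ℝ, Θ y t = C t - ∫ u in S t..y, T u t)
    (D₀ : ℝ)
    (hD₀ : D₀ = γ * (L₀ - Tm₀) - 2 * q * γ ^ 2
        + 2 * A * (Real.sqrt Real.pi / 2 * erf γ
            + Real.sqrt Real.pi * γ ^ 2 * erf γ + γ * Real.exp (-γ ^ 2)))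
    (hD₀ne : D₀ ≠ 0) :
    ∀ δ : ℝ, 0 < δ → ∀ t : ℝ, 0 < t →
      T 0 t / (δ * Θ 0 t) = (2 * A / D₀) / (δ * Real.sqrt t) :=
  stmt17_general q L₀ Tm₀ γ A T hT S hS C hC Θ hΘ D₀ hD₀
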